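/- For α, β ∈ (-π/2, π/2], ψ_β ∘ ψ_α = ψ_γ, where γ ∈ (-π/2, π/2] is the unique number with g(γ) ≡ g(α) + g(β) (mod 2K). -/

import Mathlib

noncomputable def g (k θ : ℝ) : ℝ := ∫ t in (0:ℝ)..θ, 1 / Real.sqrt (1 - k^2 * Real.sin t ^ 2)

/-- `K` is the complete elliptic integral `g(π/2)`. -/
noncomputable def KK (k : ℝ) : ℝ := g k (Real.pi / 2)

/-- The amplitude function, inverse of `g`. -/
noncomputable def am (k : ℝ) : ℝ → ℝ := Function.invFun (g k)

noncomputable def cn (k u : ℝ) : ℝ := Real.cos (am k u)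
noncomputable def sn (k u : ℝ) : ℝ := Real.sin (am k u)
noncomputable def dn (k u : ℝ) : ℝ := Real.sqrt (1 - k^2 * sn k u ^ 2)

/-- The map `ψ_α` on the unit circle: writing `z = e^{2iθ}` with `θ = arg z / 2`,
`ψ_α(z) = e^{2iθ'}` where `g(θ') = g(θ) + g(α)`, i.e. `θ' = am(g(θ) + g(α))`. -/
noncomputable def psi (k α : ℝ) (z : ℂ) : ℂ :=
  Complex.exp (2 * Complex.I * (am k (g k (z.arg / 2) + g k α) : ℝ))

section lemmas

open Real intervalIntegral

noncomputable def F (k t : ℝ) : ℝ := 1 / Real.sqrt (1 - k^2 * Real.sin t ^ 2)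

variable {k : ℝ}

lemma g_eq (x : ℝ) : g k x = ∫ t in (0:ℝ)..x, F k t := rfl

lemma sub_pos' (hk : k ∈ Set.Ioo (0:ℝ) 1) (t : ℝ) : 0 < 1 - k^2 * Real.sin t ^ 2 := by
  nlinarith [Real.sin_sq_le_one t, sq_nonneg (Real.sin t), hk.1, hk.2, sq_nonneg k]

lemma F_cont (hk : k ∈ Set.Ioo (0:ℝ) 1) : Continuous (F k) := by
  apply continuous_const.div
  · exact Real.continuous_sqrt.comp (by continuity)
  · intro t
    exact ne_of_gt (Real.sqrt_pos.mpr (sub_pos' hk t))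

lemma F_one_le (hk : k ∈ Set.Ioo (0:ℝ) 1) (t : ℝ) : 1 ≤ F k t := by
  rw [F, le_div_iff₀ (Real.sqrt_pos.mpr (sub_pos' hk t)), one_mul]
  calc Real.sqrt (1 - k^2 * Real.sin t ^ 2) ≤ Real.sqrt 1 := by
        apply Real.sqrt_le_sqrt
        nlinarith [sq_nonneg (k * Real.sin t)]
    _ = 1 := Real.sqrt_one

lemma F_intble (hk : k ∈ Set.Ioo (0:ℝ) 1) (a b : ℝ) :
    IntervalIntegrable (F k) MeasureTheory.volume a b :=
  (F_cont hk).intervalIntegrable a b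

lemma g_sub_eq (hk : k ∈ Set.Ioo (0:ℝ) 1) (a b : ℝ) :
    g k b - g k a = ∫ t in a..b, F k t := by
  rw [g_eq, g_eq]
  exact intervalIntegral.integral_interval_sub_left (F_intble hk 0 b) (F_intble hk 0 a)

lemma g_sub_ge (hk : k ∈ Set.Ioo (0:ℝ) 1) {a b : ℝ} (hab : a ≤ b) :
    b - a ≤ g k b - g k a := by
  rw [g_sub_eq hk]
  have h2 : (∫ t in a..b, (1:ℝ)) ≤ ∫ t in a..b, F k t :=
    intervalIntegral.integral_mono_on hab intervalIntegrable_const (F_intble hk a b)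
      (fun t _ => F_one_le hk t)
  simpa using h2

lemma g_strictMono (hk : k ∈ Set.Ioo (0:ℝ) 1) : StrictMono (g k) := fun a b hab => by
  have := g_sub_ge hk hab.le
  linarith

lemma g_continuous (hk : k ∈ Set.Ioo (0:ℝ) 1) : Continuous (g k) := by
  have : ∀ b : ℝ, HasDerivAt (g k) (F k b) b := fun b =>
    intervalIntegral.integral_hasDerivAt_right (F_intble hk 0 b)
      ((F_cont hk).stronglyMeasurableAtFilter _ _) (F_cont hk).continuousAt
  exact continuous_iff_continuousAt.mpr fun b => (this b).differentiableAt.continuousAt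

lemma g_zero : g k 0 = 0 := by simp [g]

lemma g_surjective (hk : k ∈ Set.Ioo (0:ℝ) 1) : Function.Surjective (g k) := by
  apply (g_continuous hk).surjective
  · refine Filter.tendsto_atTop_mono' Filter.atTop ?_ Filter.tendsto_id
    filter_upwards [Filter.eventually_ge_atTop (0:ℝ)] with x hx
    have := g_sub_ge hk hx
    simp only [g_zero] at this
    simpa using by linarith
  · refine Filter.tendsto_atBot_mono' Filter.atBot ?_ Filter.tendsto_id
    filter_upwards [Filter.eventually_le_atBot (0:ℝ)] with x hx
    have := g_sub_ge hk hx
    simp only [g_zero] at this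
    simpa using by linarith

lemma am_g (hk : k ∈ Set.Ioo (0:ℝ) 1) (x : ℝ) : am k (g k x) = x :=
  Function.leftInverse_invFun (g_strictMono hk).injective x

lemma g_am (hk : k ∈ Set.Ioo (0:ℝ) 1) (u : ℝ) : g k (am k u) = u :=
  Function.invFun_eq (g_surjective hk u)

lemma F_periodic : Function.Periodic (F k) Real.pi := fun t => by
  simp [F, Real.sin_add_pi]

lemma g_pi (hk : k ∈ Set.Ioo (0:ℝ) 1) : g k Real.pi = 2 * KK k := by
  have h1 : g k Real.pi
      = (∫ t in (0:ℝ)..(Real.pi/2), F k t) + ∫ t in (Real.pi/2)..Real.pi, F k t := by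
    rw [g_eq, ← intervalIntegral.integral_add_adjacent_intervals
      (F_intble hk 0 (Real.pi/2)) (F_intble hk (Real.pi/2) Real.pi)]
  have h2 : (∫ t in (Real.pi/2)..Real.pi, F k t) = ∫ t in (0:ℝ)..(Real.pi/2), F k t := by
    have h3 := intervalIntegral.integral_comp_sub_left (a := (0:ℝ)) (b := Real.pi/2)
      (F k) Real.pi
    rw [show Real.pi - Real.pi/2 = Real.pi/2 by ring, sub_zero] at h3
    rw [← h3]
    apply intervalIntegral.integral_congr
    intro t _
    simp [F, Real.sin_pi_sub]
  rw [h1, h2, show (2:ℝ) * KK k = KK k + KK k from two_mul _]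
  rw [KK, g_eq]

lemma g_add_pi (hk : k ∈ Set.Ioo (0:ℝ) 1) (x : ℝ) :
    g k (x + Real.pi) = g k x + 2 * KK k := by
  have h1 := g_sub_eq hk x (x + Real.pi)
  rw [(F_periodic (k := k)).intervalIntegral_add_eq x 0, zero_add, ← g_eq, g_pi hk] at h1
  linarith

lemma g_add_int_pi (hk : k ∈ Set.Ioo (0:ℝ) 1) (x : ℝ) (n : ℤ) :
    g k (x + n * Real.pi) = g k x + 2 * n * KK k := by
  set c : ℝ := 2 * KK k / Real.pi with hc
  have hcπ : c * Real.pi = 2 * KK k := div_mul_cancel₀ _ Real.pi_ne_zero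
  have hper : Function.Periodic (fun x => g k x - c * x) Real.pi := by
    intro y
    simp only
    rw [g_add_pi hk, mul_add, hcπ]
    ring
  have h := hper.int_mul n x
  have key : g k (x + n * Real.pi) - g k x = c * (x + (n:ℝ) * Real.pi) - c * x := by
    have h' : g k (x + (n:ℝ) * Real.pi) - c * (x + (n:ℝ) * Real.pi) = g k x - c * x := by
      simpa [mul_comm] using h
    linarith
  have h2 : c * (x + (n:ℝ) * Real.pi) - c * x = 2 * n * KK k := by
    have : c * (x + (n:ℝ) * Real.pi) - c * x = (n:ℝ) * (c * Real.pi) := by ring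
    rw [this, hcπ]; ring
  linarith

lemma am_add (hk : k ∈ Set.Ioo (0:ℝ) 1) (u : ℝ) (n : ℤ) :
    am k (u + 2 * n * KK k) = am k u + n * Real.pi := by
  have : g k (am k u + n * Real.pi) = u + 2 * n * KK k := by
    rw [g_add_int_pi hk, g_am hk]
  rw [← this, am_g hk]

lemma exp_two_I_add (x : ℝ) (n : ℤ) :
    Complex.exp (2 * Complex.I * ((x + n * Real.pi : ℝ) : ℂ))
      = Complex.exp (2 * Complex.I * (x:ℝ)) := by
  rw [Complex.ofReal_add, mul_add, Complex.exp_add]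
  push_cast
  have h : (2:ℂ) * Complex.I * ((n:ℂ) * (Real.pi:ℂ)) = (n:ℤ) * (2 * Real.pi * Complex.I) := by
    push_cast; ring
  rw [h, Complex.exp_int_mul_two_pi_mul_I, mul_one]

end lemmas

section main

open Real

lemma psi_eq (k α : ℝ) (z : ℂ) :
    psi k α z = Complex.exp (((2 * am k (g k (z.arg / 2) + g k α) : ℝ) : ℂ) * Complex.I) := by
  rw [psi]
  congr 1
  push_cast
  ring

lemma psi_comp (hk : k ∈ Set.Ioo (0:ℝ) 1) (α β : ℝ) (z : ℂ) :
    psi k β (psi k α z)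
      = Complex.exp (2 * Complex.I * ((am k (g k (z.arg / 2) + g k α + g k β) : ℝ) : ℂ)) := by
  set θ₁ : ℝ := am k (g k (z.arg / 2) + g k α) with hθ₁
  have h2π : (0:ℝ) < 2 * Real.pi := by positivity
  set m : ℤ := toIocDiv h2π (-Real.pi) (2 * θ₁) with hm
  have harg : (psi k α z).arg = 2 * θ₁ - m * (2 * Real.pi) := by
    rw [psi_eq, Complex.arg_exp_mul_I]
    have := self_sub_toIocDiv_zsmul h2π (-Real.pi) (2 * θ₁)
    rw [← this, zsmul_eq_mul]
  have hhalf : (psi k α z).arg / 2 = θ₁ + (-m : ℤ) * Real.pi := by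
    rw [harg]; push_cast; ring
  have hgθ : g k ((psi k α z).arg / 2) = g k (z.arg / 2) + g k α + 2 * (-m : ℤ) * KK k := by
    rw [hhalf, g_add_int_pi hk, hθ₁, g_am hk]
  rw [psi, hgθ]
  have hrw : g k (z.arg / 2) + g k α + 2 * ((-m : ℤ) : ℝ) * KK k + g k β
      = (g k (z.arg / 2) + g k α + g k β) + 2 * ((-m : ℤ) : ℝ) * KK k := by ring
  rw [hrw, am_add hk]
  exact exp_two_I_add _ _

theorem stmt_9 (k : ℝ) (hk : k ∈ Set.Ioo (0:ℝ) 1)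
    (α : ℝ) (hα : α ∈ Set.Ioc (-(Real.pi/2)) (Real.pi/2))
    (β : ℝ) (hβ : β ∈ Set.Ioc (-(Real.pi/2)) (Real.pi/2)) :
    ∃! γ : ℝ, γ ∈ Set.Ioc (-(Real.pi/2)) (Real.pi/2) ∧
      (∃ p : ℤ, g k γ = g k α + g k β + 2 * p * KK k) ∧
      ∀ z : ℂ, ‖z‖ = 1 → psi k β (psi k α z) = psi k γ z := by
  have hπ : (0:ℝ) < Real.pi := Real.pi_pos
  set u : ℝ := g k α + g k β with hu
  set n : ℤ := toIocDiv hπ (-(Real.pi/2)) (am k u) with hn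
  set γ : ℝ := toIocMod hπ (-(Real.pi/2)) (am k u) with hγdef
  have hγmem : γ ∈ Set.Ioc (-(Real.pi/2)) (Real.pi/2) := by
    have h := toIocMod_mem_Ioc hπ (-(Real.pi/2)) (am k u)
    rwa [show -(Real.pi/2) + Real.pi = Real.pi/2 by ring] at h
  have hγ : γ = am k u + (-n : ℤ) * Real.pi := by
    have h := self_sub_toIocDiv_zsmul hπ (-(Real.pi/2)) (am k u)
    rw [hγdef, ← h, zsmul_eq_mul]
    push_cast; ring
  have hgγ : g k γ = u + 2 * (-n : ℤ) * KK k := by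
    rw [hγ, g_add_int_pi hk, g_am hk]
  refine ⟨γ, ⟨hγmem, ⟨-n, by rw [hgγ]⟩, ?_⟩, ?_⟩
  · intro z _
    rw [psi_comp hk, psi]
    have h1 : g k (z.arg / 2) + g k γ
        = (g k (z.arg / 2) + g k α + g k β) + 2 * (-n : ℤ) * KK k := by
      rw [hgγ, hu]; ring
    rw [h1, am_add hk]
    exact (exp_two_I_add _ _).symm
  · rintro γ' ⟨hγ'mem, ⟨p', hp'⟩, -⟩
    have hγ'eq : γ' = am k u + p' * Real.pi := by
      apply (g_strictMono hk).injective
      rw [g_add_int_pi hk, g_am hk, hp', hu]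
    have hdiff : γ' - γ = ((p' + n : ℤ) : ℝ) * Real.pi := by
      rw [hγ'eq, hγ]; push_cast; ring
    have habs : |γ' - γ| < Real.pi := by
      rw [abs_lt]
      constructor <;>
        [linarith [hγ'mem.1, hγmem.2]; linarith [hγ'mem.2, hγmem.1]]
    have hint : |((p' + n : ℤ) : ℝ)| < 1 := by
      rw [hdiff, abs_mul, abs_of_pos hπ] at habs
      nlinarith [abs_nonneg ((p' + n : ℤ) : ℝ)]
    have : (p' + n : ℤ) = 0 := by
      rw [← Int.cast_abs] at hint
      have h' : |p' + n| < 1 := by exact_mod_cast hint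
      exact Int.abs_lt_one_iff.mp h'
    have : γ' - γ = 0 := by rw [hdiff, this]; simp
    linarith

end main
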